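/- arXiv:0801.2006 — 2 statements merged into one kernel-verified Lean document; each statement's English description precedes it below -/
import Mathlib

section
/- For every δ ≥ 0 and every Q ≥ 0 there exist K ≥ 1 and C ≥ 0, depending only on δ and Q, with the following property: if X is a δ-hyperbolic geodesic metric space, B and B' are nonempty Q-quasiconvex subsets of X with Metric.hausdorffEdist B B' < ∞, x, x' ∈ X, p ∈ B satisfies dist x p ≤ Metric.infDist x B + 1, and p' ∈ B' satisfies dist x' p' ≤ Metric.infDist x' B' + 1, then dist p p' ≤ K · (dist x x' + d_H(B, B')) + C. (Lemma 5.1(4) of the paper: the nearest point retraction onto a quasiconvex set is coarsely Lipschitz jointly in the point and in the set, in terms of Hausdorff distance.) -/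
/-- A metric space is `δ`-hyperbolic if it satisfies the four-point condition. -/
def DeltaHyperbolic (X : Type*) [MetricSpace X] (δ : ℝ) : Prop :=
  ∀ w x y z : X,
    dist w x + dist y z ≤ max (dist w y + dist x z) (dist w z + dist x y) + 2 * δ

/-- `γ : ℝ → X` is a geodesic from `a` to `b`, parametrized by arclength on
`[0, dist a b]`. -/
def IsGeodesicFrom {X : Type*} [MetricSpace X] (γ : ℝ → X) (a b : X) : Prop :=
  γ 0 = a ∧ γ (dist a b) = b ∧
    ∀ s ∈ Set.Icc (0 : ℝ) (dist a b), ∀ t ∈ Set.Icc (0 : ℝ) (dist a b),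
      dist (γ s) (γ t) = |s - t|

/-- A metric space is geodesic if every pair of points is joined by a geodesic. -/
def GeodesicSpace (X : Type*) [MetricSpace X] : Prop :=
  ∀ a b : X, ∃ γ : ℝ → X, IsGeodesicFrom γ a b

/-- `H` is a geodesic hull of `A`: the union over pairs `(a, a') ∈ A × A` of the
image of a chosen geodesic from `a` to `a'`. -/
def IsGeodesicHull {X : Type*} [MetricSpace X] (A H : Set X) : Prop :=
  ∃ γ : X → X → ℝ → X,
    (∀ a ∈ A, ∀ a' ∈ A, IsGeodesicFrom (γ a a') a a') ∧
    H = ⋃ a ∈ A, ⋃ a' ∈ A, γ a a' '' Set.Icc 0 (dist a a')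

/-- A subset `B` is `Q`-quasiconvex if every point on every geodesic joining
two points of `B` lies within distance `Q` of `B`. -/
def IsQuasiconvexSet {X : Type*} [MetricSpace X] (Q : ℝ) (B : Set X) : Prop :=
  ∀ p ∈ B, ∀ q ∈ B, ∀ γ : ℝ → X, IsGeodesicFrom γ p q →
    ∀ t ∈ Set.Icc (0 : ℝ) (dist p q), Metric.infDist (γ t) B ≤ Q

universe u

/-! If `p` is a `1`-nearest point to `x` in a `Q`-quasiconvex set `B`, then for every `b ∈ B`
the Gromov product `(x | b)_p` is at most `Q + 2δ + 1`: by the four-point condition, the point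
of a geodesic `[p, b]` at distance `(x | b)_p` from `p` is `2δ`-close to being on a geodesic
from `x` to `p`, and it lies within `Q` of `B`, so it would be a much nearer point of `B` if the
Gromov product were large. Hence `p` almost lies on geodesics from `x` to points of `B`.
Comparing `p` and `p'` through points of `B` and `B'` that are `d_H(B, B')`-close to them and
applying the four-point condition to `x, p', x', p` gives the bound with `K = 4`. -/

open Metric

variable {X : Type*} [MetricSpace X]

noncomputable def gromovProduct (o x y : X) : ℝ := (dist o x + dist o y - dist x y) / 2

lemma gromovProduct_nonneg (o x y : X) : 0 ≤ gromovProduct o x y := by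
  have := dist_triangle_left x y o
  unfold gromovProduct
  linarith

lemma gromovProduct_le_dist_right (o x y : X) : gromovProduct o x y ≤ dist o y := by
  have := dist_triangle_right o x y
  unfold gromovProduct
  linarith

namespace IsGeodesicFrom

variable {γ : ℝ → X} {a b : X} {t : ℝ}

lemma dist_left (hγ : IsGeodesicFrom γ a b) (ht : t ∈ Set.Icc 0 (dist a b)) :
    dist (γ t) a = t := by
  obtain ⟨h0, -, hiso⟩ := hγ
  rw [← h0, hiso t ht 0 ⟨le_rfl, dist_nonneg⟩, sub_zero, abs_of_nonneg ht.1]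

lemma dist_right (hγ : IsGeodesicFrom γ a b) (ht : t ∈ Set.Icc 0 (dist a b)) :
    dist (γ t) b = dist a b - t := by
  obtain ⟨-, hd, hiso⟩ := hγ
  have := hiso t ht _ ⟨dist_nonneg, le_rfl⟩
  rw [hd] at this
  rw [this, abs_of_nonpos (sub_nonpos.2 ht.2), neg_sub]

end IsGeodesicFrom

namespace DeltaHyperbolic

variable {δ : ℝ}

lemma dist_add_dist_le (hX : DeltaHyperbolic X δ) (x x' p p' : X) :
    dist x p' + dist x' p ≤ dist x p + dist x' p' + dist x x' + dist p p' + 2 * δ := by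
  have four := hX x p' x' p
  rw [dist_comm p' p, dist_comm p' x'] at four
  have : max (dist x x' + dist p p') (dist x p + dist x' p')
      ≤ dist x p + dist x' p' + dist x x' + dist p p' :=
    max_le (by linarith [dist_nonneg (x := x) (y := p), dist_nonneg (x := x') (y := p')])
      (by linarith [dist_nonneg (x := x) (y := x'), dist_nonneg (x := p) (y := p')])
  linarith

lemma dist_geodesic_gromovProduct_le (hX : DeltaHyperbolic X δ) {γ : ℝ → X} {p b : X}
    (hγ : IsGeodesicFrom γ p b) (x : X) :
    dist x (γ (gromovProduct p x b)) ≤ dist x p - gromovProduct p x b + 2 * δ := by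
  set t := gromovProduct p x b with ht
  have htmem : t ∈ Set.Icc 0 (dist p b) :=
    ⟨gromovProduct_nonneg p x b, gromovProduct_le_dist_right p x b⟩
  have four := hX x (γ t) p b
  rw [hγ.dist_left htmem, hγ.dist_right htmem] at four
  have hsides : dist x b + t = dist x p + (dist p b - t) := by
    rw [ht, gromovProduct, dist_comm p x]
    ring
  rw [← hsides, max_self] at four
  linarith

end DeltaHyperbolic

namespace IsQuasiconvexSet

variable {δ Q : ℝ} {B : Set X} {x p b : X}

lemma gromovProduct_le_of_dist_le_infDist_add_one (hB : IsQuasiconvexSet Q B)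
    (hX : DeltaHyperbolic X δ) (hgeo : GeodesicSpace X) (hp : p ∈ B)
    (hnear : dist x p ≤ infDist x B + 1) (hb : b ∈ B) :
    gromovProduct p x b ≤ Q + 2 * δ + 1 := by
  obtain ⟨γ, hγ⟩ := hgeo p b
  set m := γ (gromovProduct p x b)
  have hmB : infDist m B ≤ Q :=
    hB p hp b hb γ hγ _ ⟨gromovProduct_nonneg p x b, gromovProduct_le_dist_right p x b⟩
  have hxm := hX.dist_geodesic_gromovProduct_le hγ x
  have : infDist x B ≤ infDist m B + dist x m := infDist_le_infDist_add_dist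
  linarith

lemma dist_le_of_dist_le_infDist_add_one (hB : IsQuasiconvexSet Q B)
    (hX : DeltaHyperbolic X δ) (hgeo : GeodesicSpace X) (hp : p ∈ B)
    (hnear : dist x p ≤ infDist x B + 1) (hb : b ∈ B) (y : X) :
    dist p y ≤ dist x y - dist x p + 2 * dist y b + 2 * (Q + 2 * δ + 1) := by
  have hgp := hB.gromovProduct_le_of_dist_le_infDist_add_one hX hgeo hp hnear hb
  unfold gromovProduct at hgp
  have := dist_triangle p b y
  have := dist_triangle x y b
  rw [dist_comm b y, dist_comm p x] at *
  linarith

end IsQuasiconvexSet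

/-- Lemma 5.1(4): nearest-point retraction onto quasiconvex sets is coarsely
Lipschitz jointly in the point and the set. -/
theorem nearest_point_retraction_coarsely_lipschitz :
    ∀ (δ : ℝ), 0 ≤ δ → ∀ (Q : ℝ), 0 ≤ Q → ∃ K C : ℝ, 1 ≤ K ∧ 0 ≤ C ∧
      ∀ (X : Type u) [MetricSpace X], DeltaHyperbolic X δ → GeodesicSpace X →
        ∀ B B' : Set X, B.Nonempty → B'.Nonempty →
          IsQuasiconvexSet Q B → IsQuasiconvexSet Q B' →
          EMetric.hausdorffEdist B B' < ⊤ →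
          ∀ x x' : X, ∀ p ∈ B, dist x p ≤ Metric.infDist x B + 1 →
            ∀ p' ∈ B', dist x' p' ≤ Metric.infDist x' B' + 1 →
              dist p p' ≤ K * (dist x x' + Metric.hausdorffDist B B') + C := by
  intro δ hδ Q hQ
  refine ⟨4, 10 * δ + 4 * Q + 8, by norm_num, by linarith, ?_⟩
  intro X _ hX hgeo B B' _ _ hqB hqB' hfin x x' p hp hxp p' hp' hx'p'
  set h := hausdorffDist B B'
  obtain ⟨b, hb, hp'b⟩ : ∃ b ∈ B, dist b p' < h + 1 :=
    exists_dist_lt_of_hausdorffDist_lt' hp' (lt_add_one h) hfin.ne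
  obtain ⟨b', hb', hpb'⟩ : ∃ b' ∈ B', dist p b' < h + 1 :=
    exists_dist_lt_of_hausdorffDist_lt hp (lt_add_one h) hfin.ne
  have hpp' := hqB.dist_le_of_dist_le_infDist_add_one hX hgeo hp hxp hb p'
  have hp'p := hqB'.dist_le_of_dist_le_infDist_add_one hX hgeo hp' hx'p' hb' p
  have four := hX.dist_add_dist_le x x' p p'
  rw [dist_comm p' p, dist_comm p' b] at *
  linarith [dist_nonneg (x := x) (y := x')]
end

section
/- For every δ ≥ 0 there exist K ≥ 0 and C ≥ 0, depending only on δ, with the following property. Let X be a δ-hyperbolic geodesic metric space, let σ be a geodesic from a to b with image S, let x, x' ∈ X, and let z, z' ∈ S satisfy dist x z = Metric.infDist x S and dist x' z' = Metric.infDist x' S (i.e., z and z' are nearest points of S to x and x' respectively). If dist z z' ≥ K, then dist x x' ≥ dist x z + dist z z' + dist z' x' − C. (The claim in the proof of Lemma 7.5 of the paper: when the nearest-point projections of two points to a geodesic are sufficiently far apart, the union of the geodesic with the two projection segments is, up to additive error depending only on δ, a tree with respect to the induced distance, so distances add along it.) -/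
universe u

/-! The nearest point `z` of a geodesic to `x` lies, up to `4δ`, on a geodesic from `x` to any
other point `y` of the geodesic: once the path from `z` towards `y` has gone further than `2δ`,
the four-point condition applied to `x`, the point reached, `z` and `y` forces the detour through
`z` to cost at most that far plus `2δ`. Applying this to both nearest
points `z`, `z'` and combining it with the four-point condition for `x, z', z, x'` shows that when
`dist z z' > 5δ`, distances add along `x, z, z', x'` up to `10δ`. -/

lemma DeltaHyperbolic.nonneg {X : Type*} [MetricSpace X] {δ : ℝ} (hyp : DeltaHyperbolic X δ)
    (x : X) : 0 ≤ δ := by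
  simpa using hyp x x x x

lemma DeltaHyperbolic.dist_add_dist_le_of_between {X : Type*} [MetricSpace X] {δ : ℝ}
    (hyp : DeltaHyperbolic X δ) {x y z w : X} (hw : dist z w + dist w y = dist z y)
    (hxz : dist x z ≤ dist x w) (hzw : 2 * δ < dist z w) :
    dist x z + dist z y ≤ dist x y + dist z w + 2 * δ := by
  have h := hyp x w z y
  rw [dist_comm w z] at h
  rcases max_choice (dist x z + dist w y) (dist x y + dist z w) with hm | hm <;> rw [hm] at h
  · linarith
  · linarith

lemma IsGeodesicFrom.exists_mem_image_between {X : Type*} [MetricSpace X] {σ : ℝ → X} {a b : X}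
    (hσ : IsGeodesicFrom σ a b) {z y : X} (hz : z ∈ σ '' Set.Icc 0 (dist a b))
    (hy : y ∈ σ '' Set.Icc 0 (dist a b)) {t : ℝ} (ht₀ : 0 ≤ t) (ht : t ≤ dist z y) :
    ∃ w ∈ σ '' Set.Icc 0 (dist a b), dist z w = t ∧ dist w y = dist z y - t := by
  obtain ⟨s, hs, rfl⟩ := hz
  obtain ⟨u, hu, rfl⟩ := hy
  have hdist := hσ.2.2
  rw [hdist s hs u hu] at ht ⊢
  rcases le_total s u with hsu | hus
  · rw [abs_of_nonpos (by linarith)] at ht ⊢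
    have hp : s + t ∈ Set.Icc 0 (dist a b) := ⟨by linarith [hs.1], by linarith [hu.2]⟩
    refine ⟨σ (s + t), ⟨s + t, hp, rfl⟩, ?_, ?_⟩
    · rw [hdist s hs _ hp, abs_of_nonpos (by linarith)]; ring
    · rw [hdist _ hp u hu, abs_of_nonpos (by linarith)]; ring
  · rw [abs_of_nonneg (by linarith)] at ht ⊢
    have hp : s - t ∈ Set.Icc 0 (dist a b) := ⟨by linarith [hu.1], by linarith [hs.2]⟩
    refine ⟨σ (s - t), ⟨s - t, hp, rfl⟩, ?_, ?_⟩
    · rw [hdist s hs _ hp, abs_of_nonneg (by linarith)]; ring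
    · rw [hdist _ hp u hu, abs_of_nonneg (by linarith)]; ring

theorem IsGeodesicFrom.dist_add_dist_le_of_infDist {X : Type*} [MetricSpace X] {δ : ℝ}
    (hyp : DeltaHyperbolic X δ) {σ : ℝ → X} {a b : X} (hσ : IsGeodesicFrom σ a b) {x y z : X}
    (hz : z ∈ σ '' Set.Icc 0 (dist a b)) (hy : y ∈ σ '' Set.Icc 0 (dist a b))
    (hx : dist x z = Metric.infDist x (σ '' Set.Icc 0 (dist a b))) :
    dist x z + dist z y ≤ dist x y + 4 * δ := by
  have hδ := hyp.nonneg x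
  have hnear : ∀ w ∈ σ '' Set.Icc 0 (dist a b), dist x z ≤ dist x w := fun w hw =>
    hx ▸ Metric.infDist_le_dist_of_mem hw
  rcases le_or_gt (dist z y) (2 * δ) with hclose | hfar
  · linarith [hnear y hy]
  refine le_of_forall_pos_le_add fun ε hε => ?_
  have hδt : 2 * δ < min (2 * δ + ε) (dist z y) := lt_min (by linarith) hfar
  obtain ⟨w, hw, hzw, hwy⟩ :=
    hσ.exists_mem_image_between hz hy (by linarith) (min_le_right (2 * δ + ε) _)
  have := hyp.dist_add_dist_le_of_between (by linarith) (hnear w hw) (hzw ▸ hδt)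
  linarith [min_le_left (2 * δ + ε) (dist z y)]

theorem IsGeodesicFrom.dist_add_dist_add_dist_le_of_infDist {X : Type*} [MetricSpace X] {δ : ℝ}
    (hyp : DeltaHyperbolic X δ) {σ : ℝ → X} {a b : X} (hσ : IsGeodesicFrom σ a b)
    {x x' z z' : X} (hz : z ∈ σ '' Set.Icc 0 (dist a b)) (hz' : z' ∈ σ '' Set.Icc 0 (dist a b))
    (hx : dist x z = Metric.infDist x (σ '' Set.Icc 0 (dist a b)))
    (hx' : dist x' z' = Metric.infDist x' (σ '' Set.Icc 0 (dist a b)))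
    (hzz' : 5 * δ < dist z z') :
    dist x z + dist z z' + dist z' x' ≤ dist x x' + 10 * δ := by
  have hxz' := hσ.dist_add_dist_le_of_infDist hyp hz hz' hx
  have hx'z := hσ.dist_add_dist_le_of_infDist hyp hz' hz hx'
  have h := hyp x z' z x'
  rw [dist_comm z' z] at h
  rw [dist_comm x' z', dist_comm z' z, dist_comm x' z] at hx'z
  rcases max_choice (dist x z + dist z' x') (dist x x' + dist z z') with hm | hm <;> rw [hm] at h
  · linarith
  · linarith

/-- Tree approximation for nearest-point projections to a geodesic in a
δ-hyperbolic space: if the projections of two points are far apart, distances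
add along the tripod, up to additive error depending only on δ. -/
theorem projections_far_implies_additive :
    ∀ (δ : ℝ), 0 ≤ δ → ∃ K C : ℝ, 0 ≤ K ∧ 0 ≤ C ∧
      ∀ (X : Type u) [MetricSpace X], DeltaHyperbolic X δ → GeodesicSpace X →
        ∀ (σ : ℝ → X) (a b : X), IsGeodesicFrom σ a b →
          ∀ (x x' z z' : X),
            z ∈ σ '' Set.Icc 0 (dist a b) → z' ∈ σ '' Set.Icc 0 (dist a b) →
            dist x z = Metric.infDist x (σ '' Set.Icc 0 (dist a b)) →
            dist x' z' = Metric.infDist x' (σ '' Set.Icc 0 (dist a b)) →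
            K ≤ dist z z' →
            dist x z + dist z z' + dist z' x' - C ≤ dist x x' := by
  intro δ hδ
  refine ⟨5 * δ + 1, 10 * δ, by linarith, by linarith, ?_⟩
  intro X _ hyp _ σ a b hσ x x' z z' hz hz' hx hx' hK
  linarith [hσ.dist_add_dist_add_dist_le_of_infDist hyp hz hz' hx hx' (by linarith)]
end
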